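/- Let ν : ℝ → ℂ be continuous and integrable with ν holomorphic in a neighborhood of ℝ, and assume the boundary values α₊, α₋ of α(λ) = exp(∫_ℝ ν(μ)/(μ−λ)dμ) from the upper and lower half-planes exist and are continuous on ℝ. Then α₋(λ) = α₊(λ) · e^{−2πi ν(λ)} for all λ ∈ ℝ. -/

import Mathlib

/-! For `ε > 0` the two kernels `(μ - (λ ∓ iε))⁻¹` differ by `-2πi` times the Cauchy density
`ε / (π ((μ - λ)² + ε²))`, the Poisson kernel of the upper half-plane. Its rescalings form an
approximate identity, so the difference of the Cauchy integrals at `λ - iε` and `λ + iε` tends to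
`-2πi ν(λ)` (Sokhotski–Plemelj), and exponentiating turns this additive jump into the
multiplicative one. -/

open Complex MeasureTheory Filter Topology

open ProbabilityTheory Bornology

theorem tendsto_norm_mul_cauchyPDFReal_cobounded :
    Tendsto (fun x : ℝ => ‖x‖ * cauchyPDFReal 0 1 x) (cobounded ℝ) (𝓝 0) := by
  have hdecay : Tendsto (fun t : ℝ => Real.pi⁻¹ * (t * (t ^ 2 + 1)⁻¹)) atTop (𝓝 0) := by
    rw [← mul_zero Real.pi⁻¹]
    refine (squeeze_zero' ?_ ?_ tendsto_inv_atTop_zero).const_mul _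
    · filter_upwards [eventually_ge_atTop 0] with t ht using by positivity
    · filter_upwards [eventually_gt_atTop 0] with t ht
      rw [← div_eq_mul_inv, div_le_iff₀ (by positivity)]
      field_simp
      nlinarith
  refine (hdecay.comp tendsto_norm_cobounded_atTop).congr fun x => ?_
  simp [cauchyPDFReal_def, Real.norm_eq_abs, sq_abs]
  ring

theorem cauchyPDFReal_eq_inv_mul_cauchyPDFReal_zero_one (x₀ : ℝ) {γ : ℝ} (hγ : 0 < γ) (x : ℝ) :
    cauchyPDFReal x₀ γ.toNNReal x = γ⁻¹ * cauchyPDFReal 0 1 (γ⁻¹ * (x₀ - x)) := by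
  simp only [cauchyPDFReal_def, Real.coe_toNNReal _ hγ.le, NNReal.coe_one]
  field_simp
  ring

theorem tendsto_integral_cauchyPDFReal_smul {E : Type*} [NormedAddCommGroup E] [NormedSpace ℝ E]
    [CompleteSpace E] {g : ℝ → E} {x₀ : ℝ} (hg : Integrable g) (hg₀ : ContinuousAt g x₀) :
    Tendsto (fun γ : ℝ => ∫ x, cauchyPDFReal x₀ γ.toNNReal x • g x) (𝓝[>] 0) (𝓝 (g x₀)) := by
  have hpeak := tendsto_integral_comp_smul_smul_of_integrable'
    (fun x => (cauchyPDF_pos 0 one_ne_zero x).le) (integral_cauchyPDFReal_eq_one 0 one_ne_zero)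
    (by simpa only [Module.finrank_self, pow_one] using tendsto_norm_mul_cauchyPDFReal_cobounded)
    hg hg₀
  refine (hpeak.comp tendsto_inv_nhdsGT_zero).congr' ?_
  filter_upwards [self_mem_nhdsWithin] with γ (hγ : 0 < γ)
  simp only [Function.comp_apply, Module.finrank_self, pow_one, smul_eq_mul,
    cauchyPDFReal_eq_inv_mul_cauchyPDFReal_zero_one x₀ hγ]

/-- Unnormalized (no factor `1 / (2πi)`), so that `α = exp ∘ cauchyTransform ν` off the real axis. -/
noncomputable def cauchyTransform (ν : ℝ → ℂ) (z : ℂ) : ℂ := ∫ x : ℝ, ν x / (x - z)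

theorem integrable_div_ofReal_sub {ν : ℝ → ℂ} (hν : Integrable ν) {z : ℂ} (hz : z.im ≠ 0) :
    Integrable (fun x : ℝ => ν x / (x - z)) := by
  simp_rw [div_eq_inv_mul]
  refine hν.bdd_mul (c := |z.im|⁻¹) (by fun_prop) (ae_of_all _ fun x => ?_)
  rw [norm_inv]
  refine inv_anti₀ (abs_pos.mpr hz) ?_
  simpa using abs_im_le_norm ((x : ℂ) - z)

theorem inv_sub_sub_inv_sub_eq_cauchyPDFReal (x₀ : ℝ) {ε : ℝ} (hε : 0 < ε) (x : ℝ) :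
    ((x : ℂ) - (x₀ - I * ε))⁻¹ - ((x : ℂ) - (x₀ + I * ε))⁻¹
      = -2 * Real.pi * I * cauchyPDFReal x₀ ε.toNNReal x := by
  rw [cauchyPDFReal_def, Real.coe_toNNReal _ hε.le]
  have h₁ : (x : ℂ) - (x₀ - I * ε) ≠ 0 := by
    intro h; simpa [hε.ne'] using congrArg im h
  have h₂ : (x : ℂ) - (x₀ + I * ε) ≠ 0 := by
    intro h; simpa [hε.ne'] using congrArg im h
  have h₃ : (((x - x₀) ^ 2 + ε ^ 2 : ℝ) : ℂ) ≠ 0 := by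
    exact_mod_cast (by positivity : (x - x₀) ^ 2 + ε ^ 2 ≠ 0)
  have hπ : (Real.pi : ℂ) ≠ 0 := by exact_mod_cast Real.pi_ne_zero
  push_cast at h₃ ⊢
  field_simp
  linear_combination (-2 * I * ε ^ 3) * I_sq

theorem cauchyTransform_sub_eq_integral_cauchyPDFReal {ν : ℝ → ℂ} (hν : Integrable ν) (x₀ : ℝ)
    {ε : ℝ} (hε : 0 < ε) :
    cauchyTransform ν (x₀ - I * ε) - cauchyTransform ν (x₀ + I * ε)
      = -2 * Real.pi * I * ∫ x, cauchyPDFReal x₀ ε.toNNReal x • ν x := by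
  have hlower : ((x₀ : ℂ) - I * ε).im ≠ 0 := by simp [hε.ne']
  have hupper : ((x₀ : ℂ) + I * ε).im ≠ 0 := by simp [hε.ne']
  rw [cauchyTransform, cauchyTransform, ← integral_sub (integrable_div_ofReal_sub hν hlower)
    (integrable_div_ofReal_sub hν hupper), ← integral_const_mul]
  refine integral_congr_ae (ae_of_all _ fun x => ?_)
  calc ν x / (x - (x₀ - I * ε)) - ν x / (x - (x₀ + I * ε))
      = ν x * (((x : ℂ) - (x₀ - I * ε))⁻¹ - ((x : ℂ) - (x₀ + I * ε))⁻¹) := by ring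
    _ = -2 * Real.pi * I * (cauchyPDFReal x₀ ε.toNNReal x • ν x) := by
      rw [inv_sub_sub_inv_sub_eq_cauchyPDFReal x₀ hε x, real_smul]
      ring

theorem tendsto_cauchyTransform_sub {ν : ℝ → ℂ} (hν : Integrable ν) {x₀ : ℝ}
    (hν₀ : ContinuousAt ν x₀) :
    Tendsto (fun ε : ℝ => cauchyTransform ν (x₀ - I * ε) - cauchyTransform ν (x₀ + I * ε))
      (𝓝[>] 0) (𝓝 (-2 * Real.pi * I * ν x₀)) := by
  refine ((tendsto_integral_cauchyPDFReal_smul hν hν₀).const_mul _).congr' ?_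
  filter_upwards [self_mem_nhdsWithin] with ε (hε : 0 < ε)
  exact (cauchyTransform_sub_eq_integral_cauchyPDFReal hν x₀ hε).symm

theorem plemelj_jump_general (ν : ℝ → ℂ) (hcont : Continuous ν) (hint : Integrable ν)
    (α : ℂ → ℂ)
    (hα : ∀ lam : ℂ, lam.im ≠ 0 →
      α lam = Complex.exp (∫ μ : ℝ, ν μ / (μ - lam)))
    (αp αm : ℝ → ℂ)
    (hplus : ∀ lam : ℝ,
      Tendsto (fun ε : ℝ => α (lam + Complex.I * ε)) (𝓝[>] 0) (𝓝 (αp lam)))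
    (hminus : ∀ lam : ℝ,
      Tendsto (fun ε : ℝ => α (lam - Complex.I * ε)) (𝓝[>] 0) (𝓝 (αm lam))) :
    ∀ lam : ℝ, αm lam = αp lam * Complex.exp (-2 * Real.pi * Complex.I * ν lam) := by
  intro lam
  have hjump := (hplus lam).mul ((continuous_exp.tendsto _).comp
    (tendsto_cauchyTransform_sub hint (hcont.continuousAt (x := lam))))
  refine tendsto_nhds_unique (hminus lam) (hjump.congr' ?_)
  filter_upwards [self_mem_nhdsWithin] with ε (hε : 0 < ε)
  have hupper : ((lam : ℂ) + I * ε).im ≠ 0 := by simp [hε.ne']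
  have hlower : ((lam : ℂ) - I * ε).im ≠ 0 := by simp [hε.ne']
  rw [Function.comp_apply, hα _ hupper, hα _ hlower, ← exp_add]
  exact congrArg cexp (add_sub_cancel _ _)

theorem plemelj_jump (ν : ℝ → ℂ) (hcont : Continuous ν) (hint : Integrable ν)
    (U : Set ℂ) (hU : IsOpen U) (hUR : ∀ x : ℝ, (x : ℂ) ∈ U)
    (N : ℂ → ℂ) (hN : DifferentiableOn ℂ N U)
    (hNν : ∀ x : ℝ, N x = ν x)
    (α : ℂ → ℂ)
    (hα : ∀ lam : ℂ, lam.im ≠ 0 →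
      α lam = Complex.exp (∫ μ : ℝ, ν μ / (μ - lam)))
    (αp αm : ℝ → ℂ) (hαp : Continuous αp) (hαm : Continuous αm)
    (hplus : ∀ lam : ℝ,
      Tendsto (fun ε : ℝ => α (lam + Complex.I * ε)) (𝓝[>] 0) (𝓝 (αp lam)))
    (hminus : ∀ lam : ℝ,
      Tendsto (fun ε : ℝ => α (lam - Complex.I * ε)) (𝓝[>] 0) (𝓝 (αm lam))) :
    ∀ lam : ℝ, αm lam = αp lam * Complex.exp (-2 * Real.pi * Complex.I * ν lam) :=
  plemelj_jump_general ν hcont hint α hα αp αm hplus hminus
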